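/- arXiv:1011.0266 — 2 statements merged into one kernel-verified Lean document; each statement's English description precedes it below -/
import Mathlib

section
/- Characterization of the zero set of the quenched rate function (Lemma 2): Let β ≥ 0, μ > 0 and h ∈ ℝ^d with 𝔮*_μ(h) = 1. Then for v ∈ ℝ^d one has J_q^h(v) = 0 if and only if both 𝔮_μ(v) = h·v and (d⁻/dλ)|_{λ=μ} 𝔮_λ(v) ≥ 1 ≥ (d⁺/dλ)|_{λ=μ} 𝔮_λ(v), where d⁻/dλ and d⁺/dλ denote the left and right derivatives of the concave function λ ↦ 𝔮_λ(v). In particular, the set M_h = {v : J_q^h(v) = 0} is a singleton if and only if the unit ball of 𝔮*_μ has a unique supporting hyperplane direction at h and λ ↦ 𝔮_λ(v) is differentiable at μ. -/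
open MeasureTheory ProbabilityTheory Real Filter Topology
open scoped ENNReal NNReal BigOperators Classical

noncomputable section

/-- A polymer: a nearest-neighbour path in `ℤ^d` of length `len`, started at the origin,
frozen after time `len`. -/
structure Polymer (d : ℕ) where
  len : ℕ
  path : ℕ → Fin d → ℤ
  start : path 0 = 0
  step : ∀ i, i < len → (∑ j, |path (i + 1) j - path i j|) = 1
  frozen : ∀ i, len ≤ i → path i = path len

namespace Polymer

variable {d : ℕ}

/-- The spatial extension `X(γ) = γ_{|γ|}`. -/
def X (γ : Polymer d) : Fin d → ℤ := γ.path γ.len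

/-- The local time of `γ` at `x`: the number of visits of `x` by `(γ_1, …, γ_{|γ|})`. -/
def localTime (γ : Polymer d) (x : Fin d → ℤ) : ℕ :=
  ((Finset.Icc 1 γ.len).filter fun i => γ.path i = x).card

end Polymer

/-- Scalar product `h ⬝ x` between `h ∈ ℝ^d` and a lattice point `x ∈ ℤ^d`. -/
def dotZ {d : ℕ} (h : Fin d → ℝ) (x : Fin d → ℤ) : ℝ := ∑ j, h j * (x j : ℝ)

/-- Scalar product of two vectors of `ℝ^d`. -/
def dotR {d : ℕ} (h u : Fin d → ℝ) : ℝ := ∑ j, h j * u j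

/-- Euclidean norm of a lattice point. -/
def znorm {d : ℕ} (x : Fin d → ℤ) : ℝ := Real.sqrt (∑ j, ((x j : ℝ)) ^ 2)

/-- Euclidean norm on `ℝ^d`. -/
def enorm' {d : ℕ} (u : Fin d → ℝ) : ℝ := Real.sqrt (∑ j, (u j) ^ 2)

/-- Embedding of `ℤ^d` in `ℝ^d`. -/
def toR {d : ℕ} (x : Fin d → ℤ) : Fin d → ℝ := fun j => (x j : ℝ)

/-- The quenched weight `q_{λ,h}^β(γ)` of a polymer `γ` in the (frozen) environment `v`:
`exp(h·X(γ) − λ|γ| − β ∑_{i=1}^{|γ|} v(γ_i)) (2d)^{-|γ|}`. -/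
def qweight {d : ℕ} (β lam : ℝ) (h : Fin d → ℝ) (v : (Fin d → ℤ) → ℝ) (γ : Polymer d) : ℝ≥0∞ :=
  ENNReal.ofReal
    (Real.exp (dotZ h γ.X - lam * γ.len - β * ∑ i ∈ Finset.Icc 1 γ.len, v (γ.path i)) *
      (1 / (2 * d : ℝ)) ^ γ.len)

/-- The quenched point-to-point partition function `Q_λ(x)` (with `h = 0`). -/
def Qpart {d : ℕ} (β lam : ℝ) (v : (Fin d → ℤ) → ℝ) (x : Fin d → ℤ) : ℝ≥0∞ :=
  ∑' γ : {γ : Polymer d // γ.X = x}, qweight β lam 0 v γ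

/-- The quenched point-to-point partition function restricted to a set `E` of polymers. -/
def QpartE {d : ℕ} (β lam : ℝ) (v : (Fin d → ℤ) → ℝ) (x : Fin d → ℤ)
    (E : Set (Polymer d)) : ℝ≥0∞ :=
  ∑' γ : {γ : Polymer d // γ.X = x ∧ γ ∈ E}, qweight β lam 0 v γ

/-- The quenched point-to-point partition function `A_{λ,n}(x)`-style, with fixed length `n`. -/
def QpartLenPt {d : ℕ} (β lam : ℝ) (v : (Fin d → ℤ) → ℝ) (n : ℕ) (x : Fin d → ℤ) : ℝ≥0∞ :=
  ∑' γ : {γ : Polymer d // γ.len = n ∧ γ.X = x}, qweight β lam 0 v γ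

/-- The quenched fixed-length partition function `Q_n(h)`. -/
def QpartLen {d : ℕ} (β : ℝ) (h : Fin d → ℝ) (v : (Fin d → ℤ) → ℝ) (n : ℕ) : ℝ≥0∞ :=
  ∑' γ : {γ : Polymer d // γ.len = n}, qweight β 0 h v γ

/-- The quenched fixed-length partition function restricted to a set `E` of polymers. -/
def QpartLenE {d : ℕ} (β : ℝ) (h : Fin d → ℝ) (v : (Fin d → ℤ) → ℝ) (n : ℕ)
    (E : Set (Polymer d)) : ℝ≥0∞ :=
  ∑' γ : {γ : Polymer d // γ.len = n ∧ γ ∈ E}, qweight β 0 h v γ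

/-- The quenched polymer measure `ℚ_n^h(E)` of a set `E` of polymers of length `n`. -/
def Qmeas {d : ℕ} (β : ℝ) (h : Fin d → ℝ) (v : (Fin d → ℤ) → ℝ) (n : ℕ)
    (E : Set (Polymer d)) : ℝ≥0∞ :=
  QpartLenE β h v n E / QpartLen β h v n

/-- The standing assumptions on the random environment `{V(x)}_{x ∈ ℤ^d}`: a family of
i.i.d. non-degenerate non-negative bounded random variables with `0` in the support. -/
structure Environment (d : ℕ) {Ω : Type*} [MeasurableSpace Ω] (Pr : Measure Ω) where
  V : (Fin d → ℤ) → Ω → ℝ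
  meas : ∀ x, Measurable (V x)
  nonneg : ∀ x ω, 0 ≤ V x ω
  bounded : ∃ M : ℝ, ∀ x ω, V x ω ≤ M
  indep : iIndepFun V Pr
  ident : ∀ x y, IdentDistrib (V x) (V y) Pr Pr
  nondeg : ∀ x (c : ℝ), ¬ (∀ᵐ ω ∂Pr, V x ω = c)
  zeroSupp : ∀ x, ∀ ε : ℝ, 0 < ε → 0 < Pr {ω | V x ω < ε}

variable {Ω : Type*} [MeasurableSpace Ω]

/-- The annealed point-to-point partition function `A_λ(x) = 𝔼 Q_λ(x)`. -/
def Apart {d : ℕ} (Pr : Measure Ω) (env : Environment d Pr) (β lam : ℝ)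
    (x : Fin d → ℤ) : ℝ≥0∞ :=
  ∫⁻ ω, Qpart β lam (fun z => env.V z ω) x ∂Pr

/-- The annealed point-to-point partition function restricted to a set `E` of polymers. -/
def ApartE {d : ℕ} (Pr : Measure Ω) (env : Environment d Pr) (β lam : ℝ)
    (x : Fin d → ℤ) (E : Set (Polymer d)) : ℝ≥0∞ :=
  ∫⁻ ω, QpartE β lam (fun z => env.V z ω) x E ∂Pr

/-- The annealed fixed-length point-to-point partition function `A_{λ,n}(x)`. -/
def ApartLenPt {d : ℕ} (Pr : Measure Ω) (env : Environment d Pr) (β lam : ℝ)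
    (n : ℕ) (x : Fin d → ℤ) : ℝ≥0∞ :=
  ∫⁻ ω, QpartLenPt β lam (fun z => env.V z ω) n x ∂Pr

/-- The annealed fixed-length partition function `A_n(h) = 𝔼 Q_n(h)`. -/
def ApartLen {d : ℕ} (Pr : Measure Ω) (env : Environment d Pr) (β : ℝ)
    (h : Fin d → ℝ) (n : ℕ) : ℝ≥0∞ :=
  ∫⁻ ω, QpartLen β h (fun z => env.V z ω) n ∂Pr

/-- The annealed fixed-length partition function restricted to a set `E`. -/
def ApartLenE {d : ℕ} (Pr : Measure Ω) (env : Environment d Pr) (β : ℝ)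
    (h : Fin d → ℝ) (n : ℕ) (E : Set (Polymer d)) : ℝ≥0∞ :=
  ∫⁻ ω, QpartLenE β h (fun z => env.V z ω) n E ∂Pr

/-- The annealed polymer measure `𝔸_n^h(E)` on polymers of length `n`. -/
def AmeasLen {d : ℕ} (Pr : Measure Ω) (env : Environment d Pr) (β : ℝ)
    (h : Fin d → ℝ) (n : ℕ) (E : Set (Polymer d)) : ℝ≥0∞ :=
  ApartLenE Pr env β h n E / ApartLen Pr env β h n

/-- The annealed polymer measure `𝔸_λ^x(E)` on polymers from `0` to `x`. -/
def AmeasPt {d : ℕ} (Pr : Measure Ω) (env : Environment d Pr) (β lam : ℝ)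
    (x : Fin d → ℤ) (E : Set (Polymer d)) : ℝ≥0∞ :=
  ApartE Pr env β lam x E / Apart Pr env β lam x

/-- `a` is the annealed Lyapunov exponent `𝔞_λ` (viewed as a function on `ℝ^d`, through its
values on lattice points). -/
def IsAnnealedLyapunov {d : ℕ} (Pr : Measure Ω) (env : Environment d Pr) (β lam : ℝ)
    (a : (Fin d → ℝ) → ℝ) : Prop :=
  ∀ x : Fin d → ℤ,
    Tendsto (fun N : ℕ => -(1 / (N : ℝ)) * Real.log (Apart Pr env β lam (N • x)).toReal)
      atTop (𝓝 (a (toR x)))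

/-- `q` is the (deterministic) quenched Lyapunov exponent `𝔮_λ` (viewed as a function on
`ℝ^d`, through its values on lattice points). -/
def IsQuenchedLyapunov {d : ℕ} (Pr : Measure Ω) (env : Environment d Pr) (β lam : ℝ)
    (q : (Fin d → ℝ) → ℝ) : Prop :=
  ∀ᵐ ω ∂Pr, ∀ x : Fin d → ℤ,
    Tendsto (fun N : ℕ => -(1 / (N : ℝ)) * Real.log (Qpart β lam (fun z => env.V z ω) (N • x)).toReal)
      atTop (𝓝 (q (toR x)))

/-- `a` is a norm on `ℝ^d`, equivalent to the Euclidean norm. -/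
def IsEquivNorm {d : ℕ} (a : (Fin d → ℝ) → ℝ) : Prop :=
  (∀ u v, a (u + v) ≤ a u + a v) ∧ (∀ (c : ℝ) (u), a (c • u) = |c| * a u) ∧
  (∃ C : ℝ, 0 < C ∧ ∀ u, C⁻¹ * enorm' u ≤ a u ∧ a u ≤ C * enorm' u)

/-- The polar norm `a*(h) = sup_{u ≠ 0} h·u / a(u)`. -/
def polar {d : ℕ} (a : (Fin d → ℝ) → ℝ) (h : Fin d → ℝ) : ℝ :=
  ⨆ u : {u : Fin d → ℝ // u ≠ 0}, dotR h u.1 / a u.1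

/-!
Write `J_q^h(v) = [sup_{λ ≥ 0} (𝔮_λ(v) − λ) − (𝔮_μ(v) − μ)] + [𝔮_μ(v) − h·v]`. Both brackets are
non-negative, the second because `h·v ≤ 𝔮_μ(v)` when `𝔮*_μ(h) = 1`. So `J_q^h(v) = 0` iff
`𝔮_μ(v) = h·v` and the concave map `λ ↦ 𝔮_λ(v) − λ` is maximal at `μ`, i.e. `d⁺ ≤ 1 ≤ d⁻`.

By homogeneity, for `u` on the face `{𝔮_μ = 1 = h·(·)}` the zeros of `J_q^h` on the ray through
`u` are the `t u` with `t ∈ [1/d⁻(u), 1/d⁺(u)]`. This segment is non-empty: raising `λ` by one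
costs a factor `e^{-|x|_1}` on every path to `x`, so `𝔮_{μ+1} ≥ 𝔮_μ + |·|_1` and `d⁺(u) > 0`.
Hence the zero set is a singleton iff the face is a single point and the segment degenerates,
`d⁺ = d⁻`.
-/

open Set

section OneSidedDerivatives

variable {S : Set ℝ} {f : ℝ → ℝ} {x : ℝ}

theorem hasDerivAt_of_hasDerivWithinAt_Iio_Ioi {f' : ℝ} (hl : HasDerivWithinAt f f' (Iio x) x)
    (hr : HasDerivWithinAt f f' (Ioi x) x) : HasDerivAt f f' x :=
  hasDerivAt_iff_tendsto_slope_left_right.2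
    ⟨(hasDerivWithinAt_iff_tendsto_slope' self_notMem_Iio).1 hl,
      (hasDerivWithinAt_iff_tendsto_slope' self_notMem_Ioi).1 hr⟩

theorem differentiableAt_iff_derivWithin_Ioi_eq_Iio (hl : DifferentiableWithinAt ℝ f (Iio x) x)
    (hr : DifferentiableWithinAt ℝ f (Ioi x) x) :
    DifferentiableAt ℝ f x ↔ derivWithin f (Ioi x) x = derivWithin f (Iio x) x := by
  refine ⟨fun hf => ?_, fun heq => ?_⟩
  · rw [hf.derivWithin (uniqueDiffWithinAt_Ioi x), hf.derivWithin (uniqueDiffWithinAt_Iio x)]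
  · exact (hasDerivAt_of_hasDerivWithinAt_Iio_Ioi hl.hasDerivWithinAt
      (heq ▸ hr.hasDerivWithinAt)).differentiableAt

theorem exists_hasDerivWithinAt_Iio_Ioi_iff {c : ℝ} (hl : DifferentiableWithinAt ℝ f (Iio x) x)
    (hr : DifferentiableWithinAt ℝ f (Ioi x) x) :
    (∃ Dm Dp : ℝ, HasDerivWithinAt f Dm (Iio x) x ∧ HasDerivWithinAt f Dp (Ioi x) x ∧
        Dp ≤ c ∧ c ≤ Dm) ↔
      derivWithin f (Ioi x) x ≤ c ∧ c ≤ derivWithin f (Iio x) x := by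
  refine ⟨fun ⟨Dm, Dp, hDm, hDp, hDpc, hcDm⟩ => ?_, fun hc =>
    ⟨_, _, hl.hasDerivWithinAt, hr.hasDerivWithinAt, hc⟩⟩
  rw [hDm.derivWithin (uniqueDiffWithinAt_Iio x), hDp.derivWithin (uniqueDiffWithinAt_Ioi x)]
  exact ⟨hDpc, hcDm⟩

namespace ConcaveOn

theorem differentiableWithinAt_Ioi_of_mem_interior (hf : ConcaveOn ℝ S f)
    (hx : x ∈ interior S) : DifferentiableWithinAt ℝ f (Ioi x) x := by
  simpa using (hf.neg.differentiableWithinAt_Ioi_of_mem_interior hx).neg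

theorem differentiableWithinAt_Iio_of_mem_interior (hf : ConcaveOn ℝ S f)
    (hx : x ∈ interior S) : DifferentiableWithinAt ℝ f (Iio x) x := by
  simpa using (hf.neg.differentiableWithinAt_Iio_of_mem_interior hx).neg

theorem rightDeriv_le_leftDeriv_of_mem_interior (hf : ConcaveOn ℝ S f) (hx : x ∈ interior S) :
    derivWithin f (Ioi x) x ≤ derivWithin f (Iio x) x := by
  simpa [derivWithin.neg] using hf.neg.leftDeriv_le_rightDeriv_of_mem_interior hx

theorem isMaxOn_sub_mul_iff (hf : ConcaveOn ℝ S f) (hx : x ∈ interior S) (c : ℝ) :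
    IsMaxOn (fun y => f y - c * y) S x ↔
      derivWithin f (Ioi x) x ≤ c ∧ c ≤ derivWithin f (Iio x) x := by
  have hS : S ∈ 𝓝 x := mem_interior_iff_mem_nhds.1 hx
  rw [isMaxOn_iff]
  constructor
  · intro hmax
    have hslope : ∀ y ∈ S, (y - x) * c ≥ f y - f x := fun y hy => by linarith [hmax y hy]
    refine ⟨le_of_tendsto ((hasDerivWithinAt_iff_tendsto_slope' self_notMem_Ioi).1
      (hf.differentiableWithinAt_Ioi_of_mem_interior hx).hasDerivWithinAt) ?_,
      ge_of_tendsto ((hasDerivWithinAt_iff_tendsto_slope' self_notMem_Iio).1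
      (hf.differentiableWithinAt_Iio_of_mem_interior hx).hasDerivWithinAt) ?_⟩
    · filter_upwards [nhdsWithin_le_nhds hS, self_mem_nhdsWithin] with y hy (hxy : x < y)
      rw [slope_def_field, div_le_iff₀ (sub_pos.2 hxy)]
      linarith [hslope y hy]
    · filter_upwards [nhdsWithin_le_nhds hS, self_mem_nhdsWithin] with y hy (hyx : y < x)
      rw [slope_def_field, le_div_iff_of_neg (sub_neg.2 hyx)]
      linarith [hslope y hy]
  · rintro ⟨hr, hl⟩ y hy
    have hxS := interior_subset hx
    rcases lt_trichotomy y x with hyx | rfl | hxy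
    · have := (hf.leftDeriv_le_slope hy hxS hyx
        (hf.differentiableWithinAt_Iio_of_mem_interior hx)).trans' hl
      rw [slope_def_field, le_div_iff₀ (sub_pos.2 hyx)] at this
      linarith
    · exact le_rfl
    · have := (hf.slope_le_rightDeriv hxS hy hxy
        (hf.differentiableWithinAt_Ioi_of_mem_interior hx)).trans hr
      rw [slope_def_field, div_le_iff₀ (sub_pos.2 hxy)] at this
      linarith

theorem rightDeriv_pos_of_lt {y : ℝ} (hf : ConcaveOn ℝ S f)
    (hx : x ∈ interior S) (hy : y ∈ S) (hxy : x < y) (hfxy : f x < f y) :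
    0 < derivWithin f (Ioi x) x := by
  refine lt_of_lt_of_le ?_ (hf.slope_le_rightDeriv (interior_subset hx) hy hxy
    (hf.differentiableWithinAt_Ioi_of_mem_interior hx))
  rw [slope_def_field]
  exact div_pos (sub_pos.2 hfxy) (sub_pos.2 hxy)

end ConcaveOn

end OneSidedDerivatives

theorem EReal.iSup_coe_add_coe_eq_zero_iff {ι : Type*} {g : ι → ℝ} {c : ℝ} {i₀ : ι}
    (h₀ : 0 ≤ g i₀ + c) :
    (⨆ i, (g i : EReal)) + (c : EReal) = 0 ↔ g i₀ + c = 0 ∧ ∀ i, g i ≤ g i₀ := by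
  constructor
  · intro hsum
    have hle : ∀ i, g i + c ≤ 0 := fun i => by
      have : ((g i + c : ℝ) : EReal) ≤ (⨆ i, (g i : EReal)) + c := by
        rw [EReal.coe_add]; gcongr; exact le_iSup (fun i => (g i : EReal)) i
      exact_mod_cast hsum ▸ this
    exact ⟨le_antisymm (hle i₀) h₀, fun i => by linarith [hle i, hle i₀]⟩
  · rintro ⟨hzero, hmax⟩
    have hsup : (⨆ i, (g i : EReal)) = g i₀ :=
      le_antisymm (iSup_le fun i => EReal.coe_le_coe_iff.2 (hmax i))
        (le_iSup (fun i => (g i : EReal)) i₀)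
    rw [hsup, ← EReal.coe_add, hzero, EReal.coe_zero]

theorem enorm'_eq_norm {d : ℕ} (u : Fin d → ℝ) :
    enorm' u = ‖(WithLp.toLp 2 u : EuclideanSpace ℝ (Fin d))‖ := by
  simp [enorm', EuclideanSpace.norm_eq]

theorem dotR_eq_inner {d : ℕ} (h u : Fin d → ℝ) :
    dotR h u = inner ℝ (WithLp.toLp 2 h : EuclideanSpace ℝ (Fin d)) (WithLp.toLp 2 u) := by
  simp [dotR, PiLp.inner_apply, mul_comm]

theorem dotR_smul {d : ℕ} (h u : Fin d → ℝ) (t : ℝ) : dotR h (t • u) = t * dotR h u := by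
  simp [dotR_eq_inner, inner_smul_right]

theorem continuous_enorm' {d : ℕ} : Continuous (enorm' : (Fin d → ℝ) → ℝ) := by
  simp_rw [funext enorm'_eq_norm]; fun_prop

theorem enorm'_pos {d : ℕ} {u : Fin d → ℝ} (hu : u ≠ 0) : 0 < enorm' u := by
  rw [enorm'_eq_norm, norm_pos_iff]; simpa using hu

namespace IsEquivNorm

variable {d : ℕ} {a : (Fin d → ℝ) → ℝ}

theorem map_zero (ha : IsEquivNorm a) : a 0 = 0 := by
  simpa using ha.2.1 0 0

theorem map_smul_of_nonneg (ha : IsEquivNorm a) {t : ℝ} (ht : 0 ≤ t) (u : Fin d → ℝ) :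
    a (t • u) = t * a u := by
  rw [ha.2.1, abs_of_nonneg ht]

theorem pos (ha : IsEquivNorm a) {u : Fin d → ℝ} (hu : u ≠ 0) : 0 < a u := by
  obtain ⟨C, hC, hCa⟩ := ha.2.2
  exact (mul_pos (inv_pos.2 hC) (enorm'_pos hu)).trans_le (hCa u).1

theorem map_inv_smul_self (ha : IsEquivNorm a)
    {v : Fin d → ℝ} (hv : v ≠ 0) : a ((a v)⁻¹ • v) = 1 := by
  rw [ha.map_smul_of_nonneg (inv_nonneg.2 (ha.pos hv).le), inv_mul_cancel₀ (ha.pos hv).ne']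

theorem exists_enorm'_le (ha : IsEquivNorm a) : ∃ C, 0 < C ∧ ∀ u, enorm' u ≤ C * a u := by
  obtain ⟨C, hC, hCa⟩ := ha.2.2
  refine ⟨C, hC, fun u => ?_⟩
  have := mul_le_mul_of_nonneg_left (hCa u).1 hC.le
  rwa [← mul_assoc, mul_inv_cancel₀ hC.ne', one_mul] at this

theorem abs_sub_le (ha : IsEquivNorm a) (u v : Fin d → ℝ) : |a v - a u| ≤ a (v - u) := by
  have hsymm : a (u - v) = a (v - u) := by
    rw [← neg_sub, ← neg_one_smul ℝ (v - u), ha.2.1]; simp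
  have h₁ := ha.1 (v - u) u
  have h₂ := ha.1 (u - v) v
  simp only [sub_add_cancel] at h₁ h₂
  exact abs_sub_le_iff.2 ⟨by linarith, by linarith⟩

theorem continuous (ha : IsEquivNorm a) : Continuous a := by
  obtain ⟨C, -, hCa⟩ := ha.2.2
  refine continuous_iff_continuousAt.2 fun u => tendsto_iff_norm_sub_tendsto_zero.2 ?_
  have hlim : Tendsto (fun v => C * enorm' (v - u)) (𝓝 u) (𝓝 0) :=
    (continuous_const.mul (continuous_enorm'.comp (continuous_id.sub continuous_const))).tendsto'
      u 0 (by simp [enorm'])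
  exact squeeze_zero (fun v => norm_nonneg _)
    (fun v => (ha.abs_sub_le u v).trans (hCa (v - u)).2) hlim

theorem dotR_le_of_polar_eq_one (ha : IsEquivNorm a) {h : Fin d → ℝ} (hpolar : polar a h = 1)
    (u : Fin d → ℝ) : dotR h u ≤ a u := by
  rcases eq_or_ne u 0 with rfl | hu
  · simp [dotR, ha.map_zero]
  obtain ⟨C, -, hC⟩ := ha.exists_enorm'_le
  have hbdd : BddAbove (range fun w : {w : Fin d → ℝ // w ≠ 0} => dotR h w.1 / a w.1) := by
    refine ⟨enorm' h * C, forall_mem_range.2 fun w => ?_⟩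
    rw [div_le_iff₀ (ha.pos w.2), dotR_eq_inner, mul_assoc]
    refine (real_inner_le_norm _ _).trans ?_
    rw [← enorm'_eq_norm, ← enorm'_eq_norm]
    exact mul_le_mul_of_nonneg_left (hC w.1) (by rw [enorm'_eq_norm]; positivity)
  have := le_ciSup hbdd ⟨u, hu⟩
  rwa [← polar, hpolar, div_le_one (ha.pos hu)] at this

end IsEquivNorm

theorem Polymer.sum_abs_path_le {d : ℕ} (γ : Polymer d) {i : ℕ} (hi : i ≤ γ.len) :
    ∑ j, |γ.path i j| ≤ i := by
  induction i with
  | zero => simp [γ.start]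
  | succ n ih =>
    calc ∑ j, |γ.path (n + 1) j|
        ≤ ∑ j, (|γ.path n j| + |γ.path (n + 1) j - γ.path n j|) :=
          Finset.sum_le_sum fun j _ => by
            linarith [abs_sub_abs_le_abs_sub (γ.path (n + 1) j) (γ.path n j)]
      _ = ∑ j, |γ.path n j| + 1 := by rw [Finset.sum_add_distrib, γ.step n hi]
      _ ≤ (n + 1 : ℕ) := by push_cast; linarith [ih (by omega)]

theorem qweight_le_exp_mul {d : ℕ} {β μ lam c : ℝ} (hμlam : μ ≤ lam) (v : (Fin d → ℤ) → ℝ)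
    {γ : Polymer d} (hc : c ≤ γ.len) :
    qweight β lam 0 v γ ≤ ENNReal.ofReal (exp (-(lam - μ) * c)) * qweight β μ 0 v γ := by
  rw [qweight, qweight, ← ENNReal.ofReal_mul (exp_pos _).le, ← mul_assoc, ← exp_add]
  refine ENNReal.ofReal_le_ofReal (mul_le_mul_of_nonneg_right (exp_le_exp.2 ?_) (by positivity))
  nlinarith

theorem Qpart_le_exp_mul {d : ℕ} {β μ lam : ℝ} (hμlam : μ ≤ lam) (v : (Fin d → ℤ) → ℝ)
    (x : Fin d → ℤ) :
    Qpart β lam v x ≤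
      ENNReal.ofReal (exp (-(lam - μ) * ∑ j, |(x j : ℝ)|)) * Qpart β μ v x := by
  rw [Qpart, Qpart, ← ENNReal.tsum_mul_left]
  refine ENNReal.tsum_le_tsum fun ⟨γ, hγ⟩ => qweight_le_exp_mul hμlam v ?_
  subst hγ
  exact_mod_cast γ.sum_abs_path_le le_rfl

theorem add_le_of_le_exp_mul {a b : ℕ → ℝ≥0∞} {A B c : ℝ} (hA : A ≠ 0) (hB : B ≠ 0)
    (ha : Tendsto (fun N : ℕ => -(1 / (N : ℝ)) * log (a N).toReal) atTop (𝓝 A))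
    (hb : Tendsto (fun N : ℕ => -(1 / (N : ℝ)) * log (b N).toReal) atTop (𝓝 B))
    (hab : ∀ N : ℕ, b N ≤ ENNReal.ofReal (exp (-(N * c))) * a N) : A + c ≤ B := by
  -- a vanishing `toReal` would make the normalised logarithm vanish too
  have eventually_pos : ∀ {x : ℕ → ℝ≥0∞} {X : ℝ}, X ≠ 0 →
      Tendsto (fun N : ℕ => -(1 / (N : ℝ)) * log (x N).toReal) atTop (𝓝 X) →
      ∀ᶠ N in atTop, 0 < (x N).toReal := fun hX hx =>
    (hx.eventually_ne hX).mono fun N hN =>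
      ENNReal.toReal_nonneg.lt_of_ne fun h => hN (by rw [← h, log_zero, mul_zero])
  refine le_of_tendsto_of_tendsto (ha.add_const c) hb ?_
  filter_upwards [eventually_pos hA ha, eventually_pos hB hb, eventually_gt_atTop 0]
    with N haN hbN hN
  have hle : (b N).toReal ≤ exp (-(N * c)) * (a N).toReal := by
    have := ENNReal.toReal_mono (ENNReal.mul_ne_top ENNReal.ofReal_ne_top
      (ENNReal.toReal_pos_iff.1 haN).2.ne) (hab N)
    rwa [ENNReal.toReal_mul, ENNReal.toReal_ofReal (exp_pos _).le] at this
  have hlog := log_le_log hbN hle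
  rw [log_mul (exp_pos _).ne' haN.ne', log_exp] at hlog
  have hN' : (0 : ℝ) < N := by exact_mod_cast hN
  have key : 1 / (N : ℝ) * (-(N * c) + log (a N).toReal) = -c + 1 / N * log (a N).toReal := by
    field_simp
  nlinarith [mul_le_mul_of_nonneg_left hlog (one_div_nonneg.2 hN'.le)]

theorem IsQuenchedLyapunov.add_mul_sum_abs_le {d : ℕ} {Pr : Measure Ω} [NeZero Pr]
    {env : Environment d Pr} {β μ lam : ℝ} {qμ qlam : (Fin d → ℝ) → ℝ} (hμlam : μ ≤ lam)
    (hqμ : IsQuenchedLyapunov Pr env β μ qμ) (hqlam : IsQuenchedLyapunov Pr env β lam qlam)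
    {x : Fin d → ℤ} (hxμ : qμ (toR x) ≠ 0) (hxlam : qlam (toR x) ≠ 0) :
    qμ (toR x) + (lam - μ) * ∑ j, |(x j : ℝ)| ≤ qlam (toR x) := by
  obtain ⟨ω, hωμ, hωlam⟩ := (hqμ.and hqlam).exists
  refine add_le_of_le_exp_mul hxμ hxlam (hωμ x) (hωlam x) fun N => ?_
  have hsum : ∑ j, |((N • x) j : ℝ)| = N * ∑ j, |(x j : ℝ)| := by
    simp [Finset.mul_sum, abs_mul]
  convert Qpart_le_exp_mul hμlam _ (N • x) using 4
  rw [hsum]; ring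

theorem tendsto_inv_mul_floor_mul (r : ℝ) :
    Tendsto (fun N : ℕ => (N : ℝ)⁻¹ * ⌊N * r⌋) atTop (𝓝 r) := by
  have hlow : Tendsto (fun N : ℕ => r - (N : ℝ)⁻¹) atTop (𝓝 r) := by
    simpa using tendsto_const_nhds.sub (tendsto_inv_atTop_nhds_zero_nat (𝕜 := ℝ))
  refine tendsto_of_tendsto_of_tendsto_of_le_of_le' hlow tendsto_const_nhds ?_ ?_ <;>
    filter_upwards [eventually_gt_atTop 0] with N hN <;>
    have hN' : (0 : ℝ) < N := by exact_mod_cast hN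
  · rw [le_inv_mul_iff₀ hN', mul_sub, mul_inv_cancel₀ hN'.ne']
    linarith [Int.sub_one_lt_floor ((N : ℝ) * r)]
  · rw [inv_mul_le_iff₀ hN']
    exact Int.floor_le _

@[simp]
theorem toR_zero {d : ℕ} : toR (0 : Fin d → ℤ) = 0 := by
  ext; simp [toR]

theorem toR_ne_zero {d : ℕ} {x : Fin d → ℤ} (hx : x ≠ 0) : toR x ≠ 0 :=
  fun h => hx (funext fun j => by simpa [toR] using congrFun h j)

theorem IsEquivNorm.add_mul_sum_abs_le_of_lattice {d : ℕ} {a b : (Fin d → ℝ) → ℝ}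
    (ha : IsEquivNorm a) (hb : IsEquivNorm b) {c : ℝ}
    (hlat : ∀ x : Fin d → ℤ, x ≠ 0 → a (toR x) + c * ∑ j, |(x j : ℝ)| ≤ b (toR x))
    (u : Fin d → ℝ) : a u + c * ∑ j, |u j| ≤ b u := by
  have hlat' : ∀ x : Fin d → ℤ, a (toR x) + c * ∑ j, |(x j : ℝ)| ≤ b (toR x) := fun x => by
    rcases eq_or_ne x 0 with rfl | hx
    · simp [toR_zero, ha.map_zero, hb.map_zero]
    · exact hlat x hx
  let x : ℕ → Fin d → ℤ := fun N j => ⌊N * u j⌋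
  have hlim : Tendsto (fun N : ℕ => (N : ℝ)⁻¹ • toR (x N)) atTop (𝓝 u) :=
    tendsto_pi_nhds.2 fun j => tendsto_inv_mul_floor_mul (u j)
  have hclosed : IsClosed {w : Fin d → ℝ | a w + c * ∑ j, |w j| ≤ b w} :=
    isClosed_le (ha.continuous.add (by fun_prop)) hb.continuous
  refine hclosed.mem_of_tendsto hlim (Eventually.of_forall fun N => ?_)
  have hN : (0 : ℝ) ≤ (N : ℝ)⁻¹ := by positivity
  have hsum : ∑ j, |((N : ℝ)⁻¹ • toR (x N)) j| = (N : ℝ)⁻¹ * ∑ j, |(x N j : ℝ)| := by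
    simp [Finset.mul_sum, abs_mul, toR]
  simp only [mem_ofPred_eq, ha.map_smul_of_nonneg hN, hb.map_smul_of_nonneg hN, hsum]
  nlinarith [mul_le_mul_of_nonneg_left (hlat' (x N)) hN]

/-- The quenched rate function `J_q^h`, with `Λ` standing for `Λ_q(h)`. -/
def quenchedRate {d : ℕ} (q : ℝ → (Fin d → ℝ) → ℝ) (Λ : ℝ) (h v : Fin d → ℝ) : EReal :=
  (⨆ lam : {l : ℝ // 0 ≤ l}, ((q lam.1 v - lam.1 : ℝ) : EReal)) + ((Λ - dotR h v : ℝ) : EReal)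

section ZeroSet

variable {d : ℕ} {q : ℝ → (Fin d → ℝ) → ℝ} {μ : ℝ} {h : Fin d → ℝ}

theorem quenchedRate_eq_zero_iff (hμ : 0 < μ) (hqμ : IsEquivNorm (q μ))
    (hpolar : polar (q μ) h = 1) {v : Fin d → ℝ} (hconc : ConcaveOn ℝ (Ici 0) (q · v)) :
    quenchedRate q μ h v = 0 ↔ q μ v = dotR h v ∧
      derivWithin (q · v) (Ioi μ) μ ≤ 1 ∧ 1 ≤ derivWithin (q · v) (Iio μ) μ := by
  refine (EReal.iSup_coe_add_coe_eq_zero_iff (g := fun lam : {l : ℝ // 0 ≤ l} => q lam v - lam)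
    (i₀ := ⟨μ, hμ.le⟩) (by linarith [hqμ.dotR_le_of_polar_eq_one hpolar v])).trans ?_
  rw [← hconc.isMaxOn_sub_mul_iff (by simpa using hμ), isMaxOn_iff]
  refine and_congr ⟨fun h0 => by linarith, fun h0 => by linarith⟩ ?_
  simp [Subtype.forall]

theorem derivWithin_smul_of_nonneg (hμ : 0 < μ) (hqN : ∀ lam, 0 < lam → IsEquivNorm (q lam))
    {t : ℝ} (ht : 0 ≤ t) (s : Set ℝ) (u : Fin d → ℝ) :
    derivWithin (q · (t • u)) s μ = t * derivWithin (q · u) s μ := by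
  have hev : (q · (t • u)) =ᶠ[𝓝[s] μ] fun lam => t * q lam u := by
    filter_upwards [nhdsWithin_le_nhds (eventually_gt_nhds hμ)] with lam hlam
      using (hqN lam hlam).map_smul_of_nonneg ht u
  rw [hev.derivWithin_eq ((hqN μ hμ).map_smul_of_nonneg ht u), derivWithin_const_mul_field]

theorem quenchedRate_smul_eq_zero_iff (hμ : 0 < μ) (hqN : ∀ lam, 0 < lam → IsEquivNorm (q lam))
    (hpolar : polar (q μ) h = 1) (hconc : ∀ v, ConcaveOn ℝ (Ici 0) (q · v)) {t : ℝ}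
    (ht : 0 < t) (u : Fin d → ℝ) :
    quenchedRate q μ h (t • u) = 0 ↔ q μ u = dotR h u ∧
      t * derivWithin (q · u) (Ioi μ) μ ≤ 1 ∧ 1 ≤ t * derivWithin (q · u) (Iio μ) μ := by
  rw [quenchedRate_eq_zero_iff hμ (hqN μ hμ) hpolar (hconc _),
    (hqN μ hμ).map_smul_of_nonneg ht.le, dotR_smul, mul_right_inj' ht.ne',
    derivWithin_smul_of_nonneg hμ hqN ht.le, derivWithin_smul_of_nonneg hμ hqN ht.le]

theorem ne_zero_of_quenchedRate_eq_zero (hμ : 0 < μ)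
    (hqN : ∀ lam, 0 < lam → IsEquivNorm (q lam)) (hpolar : polar (q μ) h = 1)
    (hconc : ∀ v, ConcaveOn ℝ (Ici 0) (q · v)) {v : Fin d → ℝ}
    (hv : quenchedRate q μ h v = 0) : v ≠ 0 := by
  rintro rfl
  have hzero : derivWithin (q · 0) (Iio μ) μ = 0 := by
    simpa using derivWithin_smul_of_nonneg hμ hqN le_rfl (Iio μ) (0 : Fin d → ℝ)
  linarith [((quenchedRate_eq_zero_iff hμ (hqN μ hμ) hpolar (hconc 0)).1 hv).2.2]

theorem mem_face_of_quenchedRate_eq_zero (hμ : 0 < μ)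
    (hqN : ∀ lam, 0 < lam → IsEquivNorm (q lam)) (hpolar : polar (q μ) h = 1)
    (hconc : ∀ v, ConcaveOn ℝ (Ici 0) (q · v)) {v : Fin d → ℝ}
    (hv : quenchedRate q μ h v = 0) :
    q μ ((q μ v)⁻¹ • v) = 1 ∧ dotR h ((q μ v)⁻¹ • v) = 1 := by
  have hv0 := ne_zero_of_quenchedRate_eq_zero hμ hqN hpolar hconc hv
  refine ⟨(hqN μ hμ).map_inv_smul_self hv0, ?_⟩
  rw [dotR_smul, ← ((quenchedRate_eq_zero_iff hμ (hqN μ hμ) hpolar (hconc v)).1 hv).1,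
    inv_mul_cancel₀ ((hqN μ hμ).pos hv0).ne']

theorem quenchedRate_inv_deriv_smul_eq_zero (hμ : 0 < μ)
    (hqN : ∀ lam, 0 < lam → IsEquivNorm (q lam)) (hpolar : polar (q μ) h = 1)
    (hconc : ∀ v, ConcaveOn ℝ (Ici 0) (q · v)) {u : Fin d → ℝ}
    (hpos : 0 < derivWithin (q · u) (Ioi μ) μ) (hu : q μ u = dotR h u) :
    quenchedRate q μ h ((derivWithin (q · u) (Iio μ) μ)⁻¹ • u) = 0 ∧
      quenchedRate q μ h ((derivWithin (q · u) (Ioi μ) μ)⁻¹ • u) = 0 := by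
  have hle := (hconc u).rightDeriv_le_leftDeriv_of_mem_interior (by simpa using hμ)
  have hpos' := hpos.trans_le hle
  refine ⟨(quenchedRate_smul_eq_zero_iff hμ hqN hpolar hconc (inv_pos.2 hpos') u).2
      ⟨hu, ?_, (inv_mul_cancel₀ hpos'.ne').ge⟩,
    (quenchedRate_smul_eq_zero_iff hμ hqN hpolar hconc (inv_pos.2 hpos) u).2
      ⟨hu, (inv_mul_cancel₀ hpos.ne').le, ?_⟩⟩
  · rwa [inv_mul_le_iff₀ hpos', mul_one]
  · rwa [le_inv_mul_iff₀ hpos, mul_one]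

theorem rightDeriv_pos_of_isQuenchedLyapunov {Pr : Measure Ω} [NeZero Pr]
    {env : Environment d Pr} {β : ℝ} (hμ : 0 < μ)
    (hqL : ∀ lam : ℝ, 0 ≤ lam → IsQuenchedLyapunov Pr env β lam (q lam))
    (hqN : ∀ lam, 0 < lam → IsEquivNorm (q lam)) {u : Fin d → ℝ}
    (hconc : ConcaveOn ℝ (Ici 0) (q · u)) (hu : u ≠ 0) : 0 < derivWithin (q · u) (Ioi μ) μ := by
  have hμ₁ : 0 < μ + 1 := by linarith
  have hgap := (hqN μ hμ).add_mul_sum_abs_le_of_lattice (hqN (μ + 1) hμ₁)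
    (fun x hx => (hqL μ hμ.le).add_mul_sum_abs_le (by linarith) (hqL (μ + 1) hμ₁.le)
      ((hqN μ hμ).pos (toR_ne_zero hx)).ne' ((hqN (μ + 1) hμ₁).pos (toR_ne_zero hx)).ne') u
  obtain ⟨j, hj⟩ := Function.ne_iff.1 hu
  have hsum : 0 < ∑ j, |u j| :=
    Finset.sum_pos' (fun j _ => abs_nonneg _) ⟨j, Finset.mem_univ j, abs_pos.2 hj⟩
  exact hconc.rightDeriv_pos_of_lt (by simpa using hμ) (mem_Ici.2 hμ₁.le) (lt_add_one μ)
    (by linarith)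

theorem existsUnique_face_of_existsUnique_quenchedRate_eq_zero (hμ : 0 < μ)
    (hqN : ∀ lam, 0 < lam → IsEquivNorm (q lam)) (hpolar : polar (q μ) h = 1)
    (hconc : ∀ v, ConcaveOn ℝ (Ici 0) (q · v))
    (hpos : ∀ u, u ≠ 0 → 0 < derivWithin (q · u) (Ioi μ) μ)
    (hZ : ∃! v, quenchedRate q μ h v = 0) : ∃! u, q μ u = 1 ∧ dotR h u = 1 := by
  obtain ⟨v₀, hv₀, huniq⟩ := hZ
  refine ⟨_, mem_face_of_quenchedRate_eq_zero hμ hqN hpolar hconc hv₀, fun u ⟨hq1, hd1⟩ => ?_⟩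
  have hu0 : u ≠ 0 := by rintro rfl; simp [(hqN μ hμ).map_zero] at hq1
  set D := derivWithin (q · u) (Iio μ) μ
  have hD : 0 < D :=
    (hpos u hu0).trans_le ((hconc u).rightDeriv_le_leftDeriv_of_mem_interior (by simpa using hμ))
  have hv₀u : D⁻¹ • u = v₀ :=
    huniq _ (quenchedRate_inv_deriv_smul_eq_zero hμ hqN hpolar hconc (hpos u hu0)
      (hq1.trans hd1.symm)).1
  rw [← hv₀u, (hqN μ hμ).map_smul_of_nonneg (inv_nonneg.2 hD.le), hq1, mul_one, inv_inv,
    smul_smul, mul_inv_cancel₀ hD.ne', one_smul]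

theorem differentiableAt_of_existsUnique_quenchedRate_eq_zero (hμ : 0 < μ)
    (hqN : ∀ lam, 0 < lam → IsEquivNorm (q lam)) (hpolar : polar (q μ) h = 1)
    (hconc : ∀ v, ConcaveOn ℝ (Ici 0) (q · v))
    (hpos : ∀ u, u ≠ 0 → 0 < derivWithin (q · u) (Ioi μ) μ)
    (hZ : ∃! v, quenchedRate q μ h v = 0) {v : Fin d → ℝ} (hv : quenchedRate q μ h v = 0) :
    DifferentiableAt ℝ (q · v) μ := by
  have hμ' : μ ∈ interior (Ici (0 : ℝ)) := by simpa using hμ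
  have hv0 := ne_zero_of_quenchedRate_eq_zero hμ hqN hpolar hconc hv
  obtain ⟨hleft, hright⟩ := quenchedRate_inv_deriv_smul_eq_zero hμ hqN hpolar hconc
    (hpos v hv0) ((quenchedRate_eq_zero_iff hμ (hqN μ hμ) hpolar (hconc v)).1 hv).1
  rw [differentiableAt_iff_derivWithin_Ioi_eq_Iio
    ((hconc v).differentiableWithinAt_Iio_of_mem_interior hμ')
    ((hconc v).differentiableWithinAt_Ioi_of_mem_interior hμ'),
    ← inv_inj, ← smul_left_injective ℝ hv0 |>.eq_iff]
  exact hZ.unique hright hleft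

theorem existsUnique_quenchedRate_eq_zero_of_existsUnique_face (hμ : 0 < μ)
    (hqN : ∀ lam, 0 < lam → IsEquivNorm (q lam)) (hpolar : polar (q μ) h = 1)
    (hconc : ∀ v, ConcaveOn ℝ (Ici 0) (q · v))
    (hpos : ∀ u, u ≠ 0 → 0 < derivWithin (q · u) (Ioi μ) μ)
    (hF : ∃! u, q μ u = 1 ∧ dotR h u = 1)
    (hdiff : ∀ v, quenchedRate q μ h v = 0 → DifferentiableAt ℝ (q · v) μ) :
    ∃! v, quenchedRate q μ h v = 0 := by
  have hμ' : μ ∈ interior (Ici (0 : ℝ)) := by simpa using hμ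
  obtain ⟨u₀, ⟨hq1, hd1⟩, huniq⟩ := hF
  have hu0 : u₀ ≠ 0 := by rintro rfl; simp [(hqN μ hμ).map_zero] at hq1
  refine ⟨_, (quenchedRate_inv_deriv_smul_eq_zero hμ hqN hpolar hconc (hpos u₀ hu0)
    (hq1.trans hd1.symm)).1, fun v hv => ?_⟩
  have hv0 := ne_zero_of_quenchedRate_eq_zero hμ hqN hpolar hconc hv
  have hs := (hqN μ hμ).pos hv0
  have hvu : v = q μ v • u₀ := by
    rw [← huniq _ (mem_face_of_quenchedRate_eq_zero hμ hqN hpolar hconc hv), smul_smul,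
      mul_inv_cancel₀ hs.ne', one_smul]
  have hdv := hdiff v hv
  rw [differentiableAt_iff_derivWithin_Ioi_eq_Iio
    ((hconc v).differentiableWithinAt_Iio_of_mem_interior hμ')
    ((hconc v).differentiableWithinAt_Ioi_of_mem_interior hμ')] at hdv
  rw [hvu, quenchedRate_smul_eq_zero_iff hμ hqN hpolar hconc hs] at hv
  rw [hvu, derivWithin_smul_of_nonneg hμ hqN hs.le, derivWithin_smul_of_nonneg hμ hqN hs.le]
    at hdv
  have hs₁ : q μ v * derivWithin (q · u₀) (Iio μ) μ = 1 := le_antisymm (hdv ▸ hv.2.1) hv.2.2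
  rw [hvu, eq_inv_of_mul_eq_one_left hs₁]

theorem quenched_rate_function_zero_set_general
    {d : ℕ} {Ω : Type*} [MeasurableSpace Ω] (Pr : Measure Ω) [IsProbabilityMeasure Pr]
    (env : Environment d Pr) (β : ℝ) (μ : ℝ) (hμ : 0 < μ) (h : Fin d → ℝ)
    (q : ℝ → (Fin d → ℝ) → ℝ)
    (hqL : ∀ lam : ℝ, 0 ≤ lam → IsQuenchedLyapunov Pr env β lam (q lam))
    (hqN : ∀ lam : ℝ, 0 < lam → IsEquivNorm (q lam))
    (hconc : ∀ v, ConcaveOn ℝ (Set.Ici (0 : ℝ)) (fun lam => q lam v))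
    (hpolar : polar (q μ) h = 1)
    (J : (Fin d → ℝ) → EReal)
    (hJ : J = fun v =>
      (⨆ lam : {l : ℝ // 0 ≤ l}, ((q lam.1 v - lam.1 : ℝ) : EReal)) +
        ((μ - dotR h v : ℝ) : EReal)) :
    (∀ v : Fin d → ℝ,
      (J v = 0 ↔
        q μ v = dotR h v ∧
        ∃ Dm Dp : ℝ,
          HasDerivWithinAt (fun lam => q lam v) Dm (Set.Iio μ) μ ∧
          HasDerivWithinAt (fun lam => q lam v) Dp (Set.Ioi μ) μ ∧
          Dp ≤ 1 ∧ 1 ≤ Dm)) ∧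
    ((∃! v : Fin d → ℝ, J v = 0) ↔
      ((∃! u : Fin d → ℝ, q μ u = 1 ∧ dotR h u = 1) ∧
        ∀ v : Fin d → ℝ, J v = 0 → DifferentiableAt ℝ (fun lam => q lam v) μ)) := by
  obtain rfl : J = quenchedRate q μ h := hJ
  have hμ' : μ ∈ interior (Ici (0 : ℝ)) := by simpa using hμ
  have hpos : ∀ u, u ≠ 0 → 0 < derivWithin (q · u) (Ioi μ) μ := fun u hu =>
    rightDeriv_pos_of_isQuenchedLyapunov hμ hqL hqN (hconc u) hu
  refine ⟨fun v => ?_, fun hZ => ⟨?_, fun v => ?_⟩, fun ⟨hF, hdiff⟩ => ?_⟩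
  · rw [quenchedRate_eq_zero_iff hμ (hqN μ hμ) hpolar (hconc v),
      exists_hasDerivWithinAt_Iio_Ioi_iff ((hconc v).differentiableWithinAt_Iio_of_mem_interior hμ')
        ((hconc v).differentiableWithinAt_Ioi_of_mem_interior hμ')]
  · exact existsUnique_face_of_existsUnique_quenchedRate_eq_zero hμ hqN hpolar hconc hpos hZ
  · exact differentiableAt_of_existsUnique_quenchedRate_eq_zero hμ hqN hpolar hconc hpos hZ
  · exact existsUnique_quenchedRate_eq_zero_of_existsUnique_face hμ hqN hpolar hconc hpos hF hdiff

/-- Characterization of the zero set of the quenched rate function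
(Lemma 2): for `μ > 0` and `h` with `𝔮*_μ(h) = 1`, one has `J_q^h(v) = 0` iff
`𝔮_μ(v) = h·v` and the one-sided derivatives of the concave map `λ ↦ 𝔮_λ(v)` at `μ`
satisfy `d⁻ ≥ 1 ≥ d⁺`.  In particular `M_h = {v : J_q^h(v) = 0}` is a singleton iff the
unit ball of `𝔮*_μ` has a unique supporting hyperplane direction at `h` and `λ ↦ 𝔮_λ(v)`
is differentiable at `μ` on `M_h`. -/
theorem quenched_rate_function_zero_set
    {d : ℕ} {Ω : Type*} [MeasurableSpace Ω] (Pr : Measure Ω) [IsProbabilityMeasure Pr]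
    (env : Environment d Pr) (β : ℝ) (hβ : 0 ≤ β) (μ : ℝ) (hμ : 0 < μ) (h : Fin d → ℝ)
    (q : ℝ → (Fin d → ℝ) → ℝ)
    (hqL : ∀ lam : ℝ, 0 ≤ lam → IsQuenchedLyapunov Pr env β lam (q lam))
    (hqN : ∀ lam : ℝ, 0 < lam → IsEquivNorm (q lam))
    (hconc : ∀ v, ConcaveOn ℝ (Set.Ici (0 : ℝ)) (fun lam => q lam v))
    (hmono : ∀ v, MonotoneOn (fun lam => q lam v) (Set.Ici (0 : ℝ)))
    (hpolar : polar (q μ) h = 1)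
    (hΛq : ∀ᵐ ω ∂Pr,
      Tendsto (fun n : ℕ =>
          (1 / (n : ℝ)) * Real.log (QpartLen β h (fun z => env.V z ω) n).toReal)
        atTop (𝓝 μ))
    (J : (Fin d → ℝ) → EReal)
    (hJ : J = fun v =>
      (⨆ lam : {l : ℝ // 0 ≤ l}, ((q lam.1 v - lam.1 : ℝ) : EReal)) +
        ((μ - dotR h v : ℝ) : EReal)) :
    (∀ v : Fin d → ℝ,
      (J v = 0 ↔
        q μ v = dotR h v ∧
        ∃ Dm Dp : ℝ,
          HasDerivWithinAt (fun lam => q lam v) Dm (Set.Iio μ) μ ∧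
          HasDerivWithinAt (fun lam => q lam v) Dp (Set.Ioi μ) μ ∧
          Dp ≤ 1 ∧ 1 ≤ Dm)) ∧
    ((∃! v : Fin d → ℝ, J v = 0) ↔
      ((∃! u : Fin d → ℝ, q μ u = 1 ∧ dotR h u = 1) ∧
        ∀ v : Fin d → ℝ, J v = 0 → DifferentiableAt ℝ (fun lam => q lam v) μ)) :=
  quenched_rate_function_zero_set_general Pr env β μ hμ h q hqL hqN hconc hpolar J hJ
end ZeroSet
end
end

section
/- Quenched law of large numbers under weak disorder (Lemma 11): Let β ≥ 0 and h ∈ ℝ^d with 𝔞*_0(h) > 1, and assume weak disorder at (h, β): ℙ-almost surely lim_{n→∞} (1/n) log Q_n(h) exists and equals Λ_a(h) = lim_{n→∞} (1/n) log A_n(h) > 0. Let v = ∇Λ_a(h) be the macroscopic extension under the annealed path measure. Then for every ε > 0 there exists c' > 0 such that, ℙ-almost surely, ℚ_n^h(|X(γ)/n − v| > ε) ≤ e^{−c'n} for all n large enough; in particular ℚ_n^h(|X(γ)/n − v| > ε) → 0 ℙ-a.s. -/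
open MeasureTheory ProbabilityTheory Real Filter Topology
open scoped ENNReal NNReal BigOperators Classical

noncomputable section

variable {Ω : Type*} [MeasurableSpace Ω]

/-!
Exponential tilting. On the event that `X(γ)/n` lies at distance more than `ε` from `v`, some
coordinate direction `e = ±e_j` has `e·X(γ) ≥ n (e·v + δ)` with `δ = ε/(d+1)`, so
`q_h(γ) ≤ e^{-ns(e·v+δ)} q_{h+se}(γ)` for every `s > 0`. Taking expectations, the annealed mass
of the deviation event is at most `∑_e e^{n(Λ_a(h+se) - s(e·v+δ)) + o(n)}`, and since
`v = ∇Λ_a(h)` the exponent is `n(Λ_a(h) - sδ/2)` for `s` small. Markov's inequality and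
Borel–Cantelli bring this bound to the quenched numerator almost surely, while weak disorder
bounds the quenched denominator `Q_n(h)` from below by `e^{n(Λ_a(h) - θ)}` for any `θ > 0`.
-/

namespace Polymer

variable {d : ℕ}

lemma ext_of_eqOn {γ γ' : Polymer d} (hlen : γ.len = γ'.len)
    (hpath : ∀ i ≤ γ.len, γ.path i = γ'.path i) : γ = γ' := by
  have hp : γ.path = γ'.path := funext fun i => by
    rcases le_total i γ.len with hi | hi
    · exact hpath i hi
    · rw [γ.frozen i hi, γ'.frozen i (hlen ▸ hi), ← hlen]
      exact hpath _ le_rfl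
  cases γ
  cases γ'
  dsimp only at hlen hp
  subst hlen hp
  rfl

lemma abs_path_apply_le (γ : Polymer d) (i : ℕ) (j : Fin d) : |γ.path i j| ≤ i := by
  induction i with
  | zero => simp [γ.start]
  | succ i ih =>
    have hstep : |γ.path (i + 1) j - γ.path i j| ≤ 1 := by
      rcases lt_or_ge i γ.len with hi | hi
      · rw [← γ.step i hi]
        exact Finset.single_le_sum (fun k _ => abs_nonneg (γ.path (i + 1) k - γ.path i k))
          (Finset.mem_univ j)
      · rw [γ.frozen (i + 1) (by omega), γ.frozen i hi]
        simp
    have := abs_sub_abs_le_abs_sub (γ.path (i + 1) j) (γ.path i j)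
    push_cast
    linarith

instance finite_len (n : ℕ) : Finite {γ : Polymer d // γ.len = n} := by
  refine Finite.of_injective (β := Fin (n + 1) → Fin d → Set.Icc (-(n : ℤ)) n)
    (fun γ i j => ⟨γ.1.path i j, abs_le.1 <| (γ.1.abs_path_apply_le i j).trans <| by
      have := i.2; omega⟩) fun γ γ' hγ => ?_
  refine Subtype.ext (ext_of_eqOn (γ.2.trans γ'.2.symm) fun i hi => funext fun j => ?_)
  have hi' : i < n + 1 := by have := γ.2; omega
  exact congrArg Subtype.val (congrFun (congrFun hγ ⟨i, hi'⟩) j)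

instance : Countable (Polymer d) :=
  Countable.of_equiv _ (Equiv.sigmaFiberEquiv (Polymer.len (d := d)))

end Polymer

variable {d : ℕ}

def deviationSet (v : Fin d → ℝ) (ε : ℝ) (n : ℕ) : Set (Polymer d) :=
  {γ | ε < enorm' (fun j => (γ.X j : ℝ) / n - v j)}

lemma dotZ_add (h u : Fin d → ℝ) (x : Fin d → ℤ) : dotZ (h + u) x = dotZ h x + dotZ u x := by
  simp only [dotZ, Pi.add_apply, add_mul, Finset.sum_add_distrib]

lemma qweight_le_qweight_zero {β : ℝ} (hβ : 0 ≤ β) (lam : ℝ) (h : Fin d → ℝ)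
    {v : (Fin d → ℤ) → ℝ} (hv : ∀ x, 0 ≤ v x) (γ : Polymer d) :
    qweight β lam h v γ ≤ qweight 0 lam h 0 γ := by
  refine ENNReal.ofReal_le_ofReal (mul_le_mul_of_nonneg_right (exp_le_exp.2 ?_) (by positivity))
  have := mul_nonneg hβ (Finset.sum_nonneg fun i (_ : i ∈ Finset.Icc 1 γ.len) => hv (γ.path i))
  simp only [Pi.zero_apply, Finset.sum_const_zero, zero_mul, sub_zero]
  linarith

lemma qweight_le_tilt (β : ℝ) (h u : Fin d → ℝ) (v : (Fin d → ℤ) → ℝ) {t : ℝ} {γ : Polymer d}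
    (hγ : γ.len * t ≤ dotZ u γ.X) :
    qweight β 0 h v γ ≤ ENNReal.ofReal (exp (-(γ.len * t))) * qweight β 0 (h + u) v γ := by
  rw [qweight, qweight, ← ENNReal.ofReal_mul (exp_pos _).le, ← mul_assoc, ← exp_add, dotZ_add]
  gcongr
  linarith

lemma measurable_qweight {V : (Fin d → ℤ) → Ω → ℝ} (hV : ∀ x, Measurable (V x))
    (β lam : ℝ) (h : Fin d → ℝ) (γ : Polymer d) :
    Measurable fun ω => qweight β lam h (fun z => V z ω) γ := by
  unfold qweight
  fun_prop

lemma QpartLen_lt_top (β : ℝ) (h : Fin d → ℝ) (v : (Fin d → ℤ) → ℝ) (n : ℕ) :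
    QpartLen β h v n < ⊤ := by
  have := Fintype.ofFinite {γ : Polymer d // γ.len = n}
  rw [QpartLen, tsum_fintype]
  exact ENNReal.sum_lt_top.2 fun _ _ => ENNReal.ofReal_lt_top

lemma ApartLen_lt_top (Pr : Measure Ω) [IsFiniteMeasure Pr] (env : Environment d Pr) {β : ℝ}
    (hβ : 0 ≤ β) (h : Fin d → ℝ) (n : ℕ) : ApartLen Pr env β h n < ⊤ :=
  calc ApartLen Pr env β h n ≤ ∫⁻ _, QpartLen 0 h 0 n ∂Pr :=
        lintegral_mono fun ω => ENNReal.tsum_le_tsum fun γ =>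
          qweight_le_qweight_zero hβ 0 h (fun x => env.nonneg x ω) γ
    _ < ⊤ := by
        rw [lintegral_const]
        exact ENNReal.mul_lt_top (QpartLen_lt_top 0 h 0 n) (measure_lt_top Pr _)

lemma QpartLenE_le_sum_tilt {ι : Type*} [Fintype ι] (β : ℝ) (h : Fin d → ℝ)
    (v : (Fin d → ℤ) → ℝ) (n : ℕ) (E : Set (Polymer d)) (u : ι → Fin d → ℝ) (t : ι → ℝ)
    (hE : ∀ γ ∈ E, γ.len = n → ∃ i, n * t i ≤ dotZ (u i) γ.X) :
    QpartLenE β h v n E ≤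
      ∑ i, ENNReal.ofReal (exp (-(n * t i))) * QpartLen β (h + u i) v n :=
  calc QpartLenE β h v n E
      ≤ ∑' γ : {γ : Polymer d // γ.len = n ∧ γ ∈ E},
          ∑ i, ENNReal.ofReal (exp (-(n * t i))) * qweight β 0 (h + u i) v γ :=
        ENNReal.tsum_le_tsum fun ⟨γ, hn, hγ⟩ => by
          obtain ⟨i, hi⟩ := hE γ hγ hn
          subst hn
          exact (qweight_le_tilt β h (u i) v hi).trans <|
            Finset.single_le_sum (f := fun i => ENNReal.ofReal (exp (-(γ.len * t i))) *
              qweight β 0 (h + u i) v γ) (fun _ _ => zero_le) (Finset.mem_univ i)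
    _ = ∑ i, ENNReal.ofReal (exp (-(n * t i))) *
          ∑' γ : {γ : Polymer d // γ.len = n ∧ γ ∈ E}, qweight β 0 (h + u i) v γ := by
        rw [Summable.tsum_finsetSum fun _ _ => ENNReal.summable]
        simp only [ENNReal.tsum_mul_left]
    _ ≤ _ := by
        gcongr with i
        exact ENNReal.tsum_mono_subtype (fun γ => qweight β 0 (h + u i) v γ)
          (s := {γ | γ.len = n ∧ γ ∈ E}) (t := {γ | γ.len = n}) fun _ hγ => hγ.1

lemma ApartLenE_le_sum_tilt {ι : Type*} [Fintype ι] (Pr : Measure Ω) (env : Environment d Pr)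
    (β : ℝ) (h : Fin d → ℝ) (n : ℕ) (E : Set (Polymer d)) (u : ι → Fin d → ℝ) (t : ι → ℝ)
    (hE : ∀ γ ∈ E, γ.len = n → ∃ i, n * t i ≤ dotZ (u i) γ.X) :
    ApartLenE Pr env β h n E ≤
      ∑ i, ENNReal.ofReal (exp (-(n * t i))) * ApartLen Pr env β (h + u i) n := by
  have hmeas : ∀ f : Fin d → ℝ, Measurable fun ω => QpartLen β f (fun z => env.V z ω) n :=
    fun f => Measurable.tsum fun γ => measurable_qweight env.meas β 0 f γ.1
  calc ApartLenE Pr env β h n E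
      ≤ ∫⁻ ω, ∑ i, ENNReal.ofReal (exp (-(n * t i))) *
          QpartLen β (h + u i) (fun z => env.V z ω) n ∂Pr :=
        lintegral_mono fun ω => QpartLenE_le_sum_tilt β h _ n E u t hE
    _ = _ := by
        rw [lintegral_finsetSum _ fun i _ => (hmeas _).const_mul _]
        simp only [lintegral_const_mul _ (hmeas _), ApartLen]

lemma eventually_le_exp_of_tendsto_log {a : ℕ → ℝ≥0∞} (ha : ∀ n, a n ≠ ⊤) {ℓ η : ℝ}
    (hlim : Tendsto (fun n : ℕ => 1 / (n : ℝ) * log (a n).toReal) atTop (𝓝 ℓ)) (hη : 0 < η) :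
    ∀ᶠ n : ℕ in atTop, a n ≤ ENNReal.ofReal (exp (n * (ℓ + η))) := by
  filter_upwards [hlim.eventually_lt_const (lt_add_of_pos_right ℓ hη),
    eventually_gt_atTop 0] with n hlt hn
  rw [← ENNReal.ofReal_toReal (ha n)]
  refine ENNReal.ofReal_le_ofReal ?_
  rcases ENNReal.toReal_nonneg.eq_or_lt with h0 | hpos
  · rw [← h0]
    positivity
  · rw [one_div, inv_mul_lt_iff₀ (by positivity)] at hlt
    exact ((log_lt_iff_lt_exp hpos).1 hlt).le

lemma eventually_exp_le_of_tendsto_log {a : ℕ → ℝ≥0∞} {ℓ η : ℝ}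
    (hlim : Tendsto (fun n : ℕ => 1 / (n : ℝ) * log (a n).toReal) atTop (𝓝 ℓ)) (hη : 0 < η)
    (hηℓ : η ≤ ℓ) :
    ∀ᶠ n : ℕ in atTop, ENNReal.ofReal (exp (n * (ℓ - η))) ≤ a n := by
  filter_upwards [hlim.eventually_const_lt (sub_lt_self ℓ hη), eventually_gt_atTop 0]
    with n hlt hn
  rw [one_div, lt_inv_mul_iff₀ (by positivity)] at hlt
  -- `log 0 = 0`, so a vanishing `toReal` would contradict `0 ≤ n (ℓ - η) < log (a n).toReal`
  have hpos : 0 < (a n).toReal := by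
    by_contra! h0
    rw [le_antisymm h0 ENNReal.toReal_nonneg, log_zero] at hlt
    nlinarith [(Nat.cast_pos.2 hn : (0 : ℝ) < n)]
  exact (ENNReal.ofReal_le_ofReal ((lt_log_iff_exp_lt hpos).1 hlt).le).trans
    ENNReal.ofReal_toReal_le

lemma eventually_sum_le_exp {ι : Type*} [Fintype ι] {a : ι → ℕ → ℝ≥0∞} {c η : ℝ} (hη : 0 < η)
    (ha : ∀ i, ∀ᶠ n : ℕ in atTop, a i n ≤ ENNReal.ofReal (exp (n * c))) :
    ∀ᶠ n : ℕ in atTop, ∑ i, a i n ≤ ENNReal.ofReal (exp (n * (c + η))) := by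
  have hcard : ∀ᶠ n : ℕ in atTop, (Fintype.card ι : ℝ) ≤ exp (n * η) :=
    (tendsto_exp_atTop.comp (tendsto_natCast_atTop_atTop.atTop_mul_const hη)).eventually_ge_atTop _
  filter_upwards [eventually_all.2 ha, hcard] with n han hn
  calc ∑ i, a i n ≤ ∑ _i : ι, ENNReal.ofReal (exp (n * c)) := Finset.sum_le_sum fun i _ => han i
    _ = ENNReal.ofReal (Fintype.card ι * exp (n * c)) := by
        rw [Finset.sum_const, Finset.card_univ, nsmul_eq_mul, ENNReal.ofReal_mul (by positivity),
          ENNReal.ofReal_natCast]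
    _ ≤ ENNReal.ofReal (exp (n * η) * exp (n * c)) := by gcongr
    _ = ENNReal.ofReal (exp (n * (c + η))) := by rw [← exp_add]; ring_nf

lemma ae_eventually_le_exp_of_lintegral_le {μ : Measure Ω} {X : ℕ → Ω → ℝ≥0∞}
    (hX : ∀ n, AEMeasurable (X n) μ) {c η : ℝ} (hη : 0 < η)
    (hint : ∀ᶠ n : ℕ in atTop, ∫⁻ ω, X n ω ∂μ ≤ ENNReal.ofReal (exp (n * c))) :
    ∀ᵐ ω ∂μ, ∀ᶠ n : ℕ in atTop, X n ω ≤ ENNReal.ofReal (exp (n * (c + η))) := by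
  obtain ⟨N, hN⟩ := eventually_atTop.1 hint
  set r := ENNReal.ofReal (exp (-η))
  have hr : r < 1 := ENNReal.ofReal_lt_one.2 (exp_lt_one_iff.2 (neg_lt_zero.2 hη))
  let bad : ℕ → Set Ω := fun n =>
    if N ≤ n then {ω | ENNReal.ofReal (exp (n * (c + η))) ≤ X n ω} else ∅
  have hbad : ∀ n, μ (bad n) ≤ r ^ n := by
    intro n
    by_cases hn : N ≤ n
    · simp only [bad, if_pos hn]
      calc μ {ω | ENNReal.ofReal (exp (n * (c + η))) ≤ X n ω}
          ≤ (∫⁻ ω, X n ω ∂μ) / ENNReal.ofReal (exp (n * (c + η))) :=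
            meas_ge_le_lintegral_div (hX n) (ENNReal.ofReal_pos.2 (exp_pos _)).ne'
              ENNReal.ofReal_ne_top
        _ ≤ ENNReal.ofReal (exp (n * c)) / ENNReal.ofReal (exp (n * (c + η))) := by
            gcongr
            exact hN n hn
        _ = r ^ n := by
            rw [← ENNReal.ofReal_div_of_pos (exp_pos _), ← exp_sub,
              ← ENNReal.ofReal_pow (exp_pos _).le, ← exp_nat_mul]
            ring_nf
    · simp [bad, hn]
  have hsum : ∑' n, μ (bad n) ≠ ⊤ := by
    refine ne_top_of_le_ne_top ?_ (ENNReal.tsum_le_tsum hbad)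
    rw [ENNReal.tsum_geometric]
    exact ENNReal.inv_ne_top.2 (tsub_pos_of_lt hr).ne'
  filter_upwards [ae_eventually_notMem hsum] with ω hω
  filter_upwards [hω, eventually_ge_atTop N] with n hn hNn
  simp only [bad, if_pos hNn] at hn
  exact (not_le.1 hn).le

lemma HasFDerivAt.exists_pos_forall_sub_lt {E : Type*} [NormedAddCommGroup E] [NormedSpace ℝ E]
    {f : E → ℝ} {L : E →L[ℝ] ℝ} {x : E} (hf : HasFDerivAt f L x) {ι : Type*} [Finite ι]
    (e : ι → E) {δ : ℝ} (hδ : 0 < δ) :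
    ∃ s > 0, ∀ i, f (x + s • e i) - f x < s * (L (e i) + δ) := by
  have hslope : ∀ i, ∀ᶠ s in 𝓝[>] (0 : ℝ),
      slope (fun t : ℝ => f (x + t • e i)) 0 s < L (e i) + δ := by
    intro i
    have hline : HasDerivAt (fun t : ℝ => x + t • e i) (e i) 0 := by
      simpa using ((hasDerivAt_id (0 : ℝ)).smul_const (e i)).const_add x
    have hderiv := hf.comp_hasDerivAt_of_eq 0 hline (by simp)
    exact ((hasDerivAt_iff_tendsto_slope.1 hderiv).mono_left
      (nhdsWithin_mono _ fun t ht => ne_of_gt ht)).eventually_lt_const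
      (lt_add_of_pos_right _ hδ)
  obtain ⟨s, hs, hpos⟩ := ((eventually_all.2 hslope).and self_mem_nhdsWithin).exists
  refine ⟨s, hpos, fun i => ?_⟩
  have := hs i
  simp only [slope_def_field, zero_smul, add_zero, sub_zero,
    div_lt_iff₀ (show (0 : ℝ) < s from hpos)] at this
  linarith

def coordDir : Fin d ⊕ Fin d → Fin d → ℝ :=
  Sum.elim (fun j => Pi.single j 1) (fun j => -Pi.single j 1)

lemma exists_lt_dotR_coordDir {w : Fin d → ℝ} {ε : ℝ} (hε : 0 ≤ ε) (hw : ε < enorm' w) :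
    ∃ i, ε / (d + 1) < dotR (coordDir i) w := by
  have hdot : ∀ j, dotR (coordDir (.inl j)) w = w j ∧ dotR (coordDir (.inr j)) w = -w j :=
    fun j => by simp [coordDir, dotR, Pi.single_apply]
  by_contra! hsmall
  have hcoord : ∀ j, w j ^ 2 ≤ (ε / (d + 1)) ^ 2 := fun j => by
    have h1 := hsmall (.inl j)
    have h2 := hsmall (.inr j)
    rw [(hdot j).1] at h1
    rw [(hdot j).2] at h2
    exact sq_le_sq' (by linarith) h1
  have hsum : ∑ j, w j ^ 2 ≤ ε ^ 2 :=
    calc ∑ j, w j ^ 2 ≤ ∑ _j : Fin d, (ε / (d + 1)) ^ 2 := Finset.sum_le_sum fun j _ => hcoord j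
      _ = ε ^ 2 * (d / (d + 1) ^ 2) := by
          simp only [Finset.sum_const, Finset.card_univ, Fintype.card_fin, nsmul_eq_mul]
          field_simp
      _ ≤ ε ^ 2 * 1 := by
          gcongr
          rw [div_le_one (by positivity)]
          nlinarith
      _ = ε ^ 2 := mul_one _
  have : enorm' w ≤ ε := (sqrt_le_sqrt hsum).trans (sqrt_sq hε).le
  linarith

lemma ContinuousLinearMap.apply_eq_dotR (L : (Fin d → ℝ) →L[ℝ] ℝ) (u : Fin d → ℝ) :
    L u = dotR u (fun j => L (Pi.single j 1)) := by
  calc L u = L (∑ j, u j • Pi.single j 1) := by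
        congr 1
        ext k
        simp [Pi.single_apply]
    _ = dotR u (fun j => L (Pi.single j 1)) := by simp [dotR, map_sum]

lemma exists_tilt_of_mem_deviationSet (L : (Fin d → ℝ) →L[ℝ] ℝ) {ε s : ℝ} (hε : 0 ≤ ε)
    (hs : 0 ≤ s) {n : ℕ} (hn : 0 < n) {γ : Polymer d}
    (hγ : γ ∈ deviationSet (fun j => L (Pi.single j 1)) ε n) :
    ∃ i, n * (s * (L (coordDir i) + ε / (d + 1))) ≤ dotZ (s • coordDir i) γ.X := by
  obtain ⟨i, hi⟩ := exists_lt_dotR_coordDir hε hγ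
  refine ⟨i, ?_⟩
  have hn' : (0 : ℝ) < n := Nat.cast_pos.2 hn
  have hsplit : dotZ (s • coordDir i) γ.X - n * (s * L (coordDir i)) =
      n * s * dotR (coordDir i) (fun j => (γ.X j : ℝ) / n - L (Pi.single j 1)) := by
    rw [L.apply_eq_dotR]
    simp only [dotZ, dotR, Pi.smul_apply, smul_eq_mul, Finset.mul_sum, ← Finset.sum_sub_distrib]
    refine Finset.sum_congr rfl fun j _ => ?_
    field_simp
  nlinarith [mul_le_mul_of_nonneg_left hi.le (mul_nonneg hn'.le hs)]

theorem eventually_ApartLenE_deviationSet_le (Pr : Measure Ω) [IsFiniteMeasure Pr]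
    (env : Environment d Pr) {β : ℝ} (hβ : 0 ≤ β) {Λa : (Fin d → ℝ) → ℝ}
    (hΛ : ∀ f : Fin d → ℝ,
      Tendsto (fun n : ℕ => (1 / (n : ℝ)) * log (ApartLen Pr env β f n).toReal)
        atTop (𝓝 (Λa f)))
    {h : Fin d → ℝ} {L : (Fin d → ℝ) →L[ℝ] ℝ} (hL : HasFDerivAt Λa L h) {ε : ℝ} (hε : 0 < ε) :
    ∃ κ > 0, ∀ᶠ n : ℕ in atTop,
      ApartLenE Pr env β h n (deviationSet (fun j => L (Pi.single j 1)) ε n) ≤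
        ENNReal.ofReal (exp (n * (Λa h - κ))) := by
  set δ := ε / (d + 1)
  have hδ : 0 < δ := by positivity
  obtain ⟨s, hs, hgap⟩ := hL.exists_pos_forall_sub_lt coordDir (half_pos hδ)
  have hterm : ∀ i, ∀ᶠ n : ℕ in atTop,
      ENNReal.ofReal (exp (-(n * (s * (L (coordDir i) + δ))))) *
          ApartLen Pr env β (h + s • coordDir i) n ≤
        ENNReal.ofReal (exp (n * (Λa h - s * δ / 2 + s * δ / 8))) := by
    intro i
    filter_upwards [eventually_le_exp_of_tendsto_log (fun n => (ApartLen_lt_top Pr env hβ _ n).ne)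
      (hΛ (h + s • coordDir i)) (show 0 < s * δ / 8 by positivity)] with n hn
    calc _ ≤ ENNReal.ofReal (exp (-(n * (s * (L (coordDir i) + δ))))) *
            ENNReal.ofReal (exp (n * (Λa (h + s • coordDir i) + s * δ / 8))) := by gcongr
      _ = ENNReal.ofReal (exp (n * (Λa (h + s • coordDir i) - s * (L (coordDir i) + δ)
            + s * δ / 8))) := by
          rw [← ENNReal.ofReal_mul (exp_pos _).le, ← exp_add]
          ring_nf
      _ ≤ _ := ENNReal.ofReal_le_ofReal <| exp_le_exp.2 <|
          mul_le_mul_of_nonneg_left (by linarith [hgap i]) n.cast_nonneg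
  refine ⟨s * δ / 4, by positivity, ?_⟩
  filter_upwards [eventually_sum_le_exp (show 0 < s * δ / 8 by positivity) hterm,
    eventually_gt_atTop 0] with n hn hn0
  calc ApartLenE Pr env β h n (deviationSet (fun j => L (Pi.single j 1)) ε n)
      ≤ ∑ i, ENNReal.ofReal (exp (-(n * (s * (L (coordDir i) + δ))))) *
          ApartLen Pr env β (h + s • coordDir i) n :=
        ApartLenE_le_sum_tilt Pr env β h n _ _ _ fun γ hγ _ =>
          exists_tilt_of_mem_deviationSet L hε.le hs.le hn0 hγ
    _ ≤ _ := hn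
    _ = _ := by ring_nf

theorem quenched_LLN_weak_disorder_general
    {d : ℕ} {Ω : Type*} [MeasurableSpace Ω] (Pr : Measure Ω) [IsProbabilityMeasure Pr]
    (env : Environment d Pr) (β : ℝ) (hβ : 0 ≤ β) (h : Fin d → ℝ)
    (Λa : (Fin d → ℝ) → ℝ)
    (hΛ : ∀ f : Fin d → ℝ,
      Tendsto (fun n : ℕ => (1 / (n : ℝ)) * Real.log (ApartLen Pr env β f n).toReal)
        atTop (𝓝 (Λa f)))
    (hpos : 0 < Λa h)
    (hweak : ∀ᵐ ω ∂Pr,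
      Tendsto (fun n : ℕ =>
          (1 / (n : ℝ)) * Real.log (QpartLen β h (fun z => env.V z ω) n).toReal)
        atTop (𝓝 (Λa h)))
    (L : (Fin d → ℝ) →L[ℝ] ℝ) (hL : HasFDerivAt Λa L h)
    (v : Fin d → ℝ) (hv : v = fun j => L (Pi.single j 1)) :
    ∀ ε : ℝ, 0 < ε → ∃ c' : ℝ, 0 < c' ∧ ∀ᵐ ω ∂Pr,
      (∀ᶠ n : ℕ in atTop,
        Qmeas β h (fun z => env.V z ω) n
            {γ : Polymer d | ε < enorm' (fun j => (γ.X j : ℝ) / n - v j)} ≤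
          ENNReal.ofReal (Real.exp (-c' * n))) ∧
      Tendsto (fun n : ℕ =>
          Qmeas β h (fun z => env.V z ω) n
            {γ : Polymer d | ε < enorm' (fun j => (γ.X j : ℝ) / n - v j)})
        atTop (𝓝 0) := by
  intro ε hε
  subst hv
  obtain ⟨κ, hκ, hannealed⟩ := eventually_ApartLenE_deviationSet_le Pr env hβ hΛ hL hε
  have hmeas : ∀ n, Measurable fun ω => QpartLenE β h (fun z => env.V z ω) n
      (deviationSet (fun j => L (Pi.single j 1)) ε n) := fun n =>
    Measurable.tsum fun γ => measurable_qweight env.meas β 0 h γ.1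
  have hnum := ae_eventually_le_exp_of_lintegral_le (fun n => (hmeas n).aemeasurable)
    (half_pos hκ) hannealed
  refine ⟨κ / 4, by positivity, ?_⟩
  filter_upwards [hnum, hweak] with ω hω_num hω_weak
  have hbound : ∀ᶠ n : ℕ in atTop,
      Qmeas β h (fun z => env.V z ω) n (deviationSet (fun j => L (Pi.single j 1)) ε n) ≤
        ENNReal.ofReal (exp (-(κ / 4) * n)) := by
    filter_upwards [hω_num, eventually_exp_le_of_tendsto_log (η := min (κ / 4) (Λa h)) hω_weak
      (lt_min (by positivity) hpos) (min_le_right _ _)] with n hQE hQ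
    refine (ENNReal.div_le_div hQE hQ).trans ?_
    rw [← ENNReal.ofReal_div_of_pos (exp_pos _), ← exp_sub]
    gcongr
    nlinarith [min_le_left (κ / 4) (Λa h), (Nat.cast_nonneg n : (0 : ℝ) ≤ n)]
  have hdecay : Tendsto (fun n : ℕ => ENNReal.ofReal (exp (-(κ / 4) * n))) atTop (𝓝 0) := by
    rw [← ENNReal.ofReal_zero]
    refine ENNReal.tendsto_ofReal ?_
    simpa [Function.comp_def, neg_mul] using tendsto_exp_neg_atTop_nhds_zero.comp
      (tendsto_natCast_atTop_atTop.const_mul_atTop (by positivity : (0 : ℝ) < κ / 4))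
  exact ⟨hbound, tendsto_of_tendsto_of_tendsto_of_le_of_le' tendsto_const_nhds hdecay
    (Eventually.of_forall fun _ => zero_le) hbound⟩

/-- Quenched law of large numbers under weak disorder (Lemma 11): if
`𝔞*_0(h) > 1` and weak disorder holds at `(h, β)` (`ℙ`-a.s.
`lim (1/n) log Q_n(h) = Λ_a(h) > 0`), then, with `v = ∇Λ_a(h)`, for every `ε > 0` there
is `c' > 0` such that `ℙ`-a.s. `ℚ_n^h(|X(γ)/n − v| > ε) ≤ e^{−c'n}` for all large `n`;
in particular `ℚ_n^h(|X(γ)/n − v| > ε) → 0` `ℙ`-a.s. -/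
theorem quenched_LLN_weak_disorder
    {d : ℕ} {Ω : Type*} [MeasurableSpace Ω] (Pr : Measure Ω) [IsProbabilityMeasure Pr]
    (env : Environment d Pr) (β : ℝ) (hβ : 0 ≤ β) (h : Fin d → ℝ)
    (a0 : (Fin d → ℝ) → ℝ)
    (haL : IsAnnealedLyapunov Pr env β 0 a0) (haN : IsEquivNorm a0)
    (hsup : 1 < polar a0 h)
    (Λa : (Fin d → ℝ) → ℝ)
    (hΛ : ∀ f : Fin d → ℝ,
      Tendsto (fun n : ℕ => (1 / (n : ℝ)) * Real.log (ApartLen Pr env β f n).toReal)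
        atTop (𝓝 (Λa f)))
    (hpos : 0 < Λa h)
    (hweak : ∀ᵐ ω ∂Pr,
      Tendsto (fun n : ℕ =>
          (1 / (n : ℝ)) * Real.log (QpartLen β h (fun z => env.V z ω) n).toReal)
        atTop (𝓝 (Λa h)))
    (L : (Fin d → ℝ) →L[ℝ] ℝ) (hL : HasFDerivAt Λa L h)
    (v : Fin d → ℝ) (hv : v = fun j => L (Pi.single j 1)) :
    ∀ ε : ℝ, 0 < ε → ∃ c' : ℝ, 0 < c' ∧ ∀ᵐ ω ∂Pr,
      (∀ᶠ n : ℕ in atTop,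
        Qmeas β h (fun z => env.V z ω) n
            {γ : Polymer d | ε < enorm' (fun j => (γ.X j : ℝ) / n - v j)} ≤
          ENNReal.ofReal (Real.exp (-c' * n))) ∧
      Tendsto (fun n : ℕ =>
          Qmeas β h (fun z => env.V z ω) n
            {γ : Polymer d | ε < enorm' (fun j => (γ.X j : ℝ) / n - v j)})
        atTop (𝓝 0) :=
  quenched_LLN_weak_disorder_general Pr env β hβ h Λa hΛ hpos hweak L hL v hv
end
end
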